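/- Let Z be a multiaffine real polynomial and e,f,g distinct indices. Viewing ΔZ{e,f} = A y_g² + B y_g + C as a quadratic in y_g, the middle coefficient is B = Z_e^{fg} Z_{fg}^e + Z_f^{eg} Z_{eg}^f − Z_g^{ef} Z_{ef}^g − Z_{efg} Z^{efg}. -/

import Mathlib

open MvPolynomial

/-- The deletion `Z^e`: the polynomial `Z` with `y_e` set to `0`. -/
noncomputable def del {m : ℕ} (e : Fin m) (Z : MvPolynomial (Fin m) ℝ) : MvPolynomial (Fin m) ℝ :=
  aeval (fun i => if i = e then (0 : MvPolynomial (Fin m) ℝ) else X i) Z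

/-- Multiaffine: every variable occurs to at most the first power. -/
def Multiaffine {m : ℕ} (Z : MvPolynomial (Fin m) ℝ) : Prop :=
  ∀ e : Fin m, Z.degreeOf e ≤ 1

/-- The Rayleigh difference `ΔZ{e,f} = Z_e Z_f - Z_{ef} Z`. -/
noncomputable def Ray {m : ℕ} (e f : Fin m) (Z : MvPolynomial (Fin m) ℝ) : MvPolynomial (Fin m) ℝ :=
  pderiv e Z * pderiv f Z - pderiv f (pderiv e Z) * Z

/-!
Write `Z = Z^g + y_g Z_g`. The Rayleigh difference is a quadratic form in `Z` and `y_g` is not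
differentiated, so `ΔZ{e,f} = ΔZ_g{e,f} y_g² + B y_g + ΔZ^g{e,f}`, where `B` is the polarization
of `Δ{e,f}` at `(Z^g, Z_g)`. For polynomials affine in `y_e` the `y_e`-terms of this polarization
cancel, and likewise for `y_f`, so `B` equals its value at `y_e = y_f = 0`, which is the stated
expression once deletion of `y_g` is commuted past the derivatives.
-/

namespace MvPolynomial

variable {σ R : Type*} [CommSemiring R]

theorem pderiv_comm (i j : σ) (p : MvPolynomial σ R) :
    pderiv i (pderiv j p) = pderiv j (pderiv i p) := by
  classical
  ext m
  simp only [coeff_pderiv, add_right_comm m (Finsupp.single i 1)]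
  rcases eq_or_ne i j with rfl | hij
  · rfl
  · simp only [Finsupp.coe_add, Pi.add_apply, Finsupp.single_eq_of_ne hij,
      Finsupp.single_eq_of_ne hij.symm, add_zero]
    ring

theorem add_single_mem_support_of_mem_support_pderiv [DecidableEq σ] {i : σ}
    {p : MvPolynomial σ R} {m : σ →₀ ℕ} (hm : m ∈ (pderiv i p).support) :
    m + Finsupp.single i 1 ∈ p.support := by
  rw [mem_support_iff, coeff_pderiv] at hm
  exact mem_support_iff.mpr (left_ne_zero_of_mul hm)

theorem degreeOf_pderiv_le (i j : σ) (p : MvPolynomial σ R) :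
    degreeOf i (pderiv j p) ≤ degreeOf i p := by
  classical
  refine degreeOf_le_iff.mpr fun m hm => le_trans ?_
    (monomial_le_degreeOf i (add_single_mem_support_of_mem_support_pderiv hm))
  exact Nat.le_add_right _ _

theorem degreeOf_pderiv_self_eq_zero {i : σ} {p : MvPolynomial σ R} (h : degreeOf i p ≤ 1) :
    degreeOf i (pderiv i p) = 0 := by
  classical
  refine Nat.le_zero.mp (degreeOf_le_iff.mpr fun m hm => ?_)
  have := (monomial_le_degreeOf i (add_single_mem_support_of_mem_support_pderiv hm)).trans h
  rw [Finsupp.add_apply, Finsupp.single_eq_same] at this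
  omega

theorem pderiv_eq_zero_of_degreeOf_eq_zero {i : σ} {p : MvPolynomial σ R}
    (h : degreeOf i p = 0) : pderiv i p = 0 :=
  pderiv_eq_zero_of_notMem_vars fun hi => mem_vars_iff_degreeOf_ne_zero.mp hi h

end MvPolynomial

section Deletion

variable {m : ℕ}

theorem del_monomial (g : Fin m) (s : Fin m →₀ ℕ) (a : ℝ) :
    del g (monomial s a) = if s g = 0 then monomial s a else 0 := by
  classical
  rw [del, aeval_monomial]
  split_ifs with h
  · rw [monomial_eq, algebraMap_eq]
    congr 1
    refine Finsupp.prod_congr fun i hi => ?_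
    rw [if_neg]
    rintro rfl
    exact Finsupp.mem_support_iff.mp hi h
  · rw [Finsupp.prod, Finset.prod_eq_zero (Finsupp.mem_support_iff.mpr h) (by simp [h]),
      mul_zero]

theorem coeff_del (g : Fin m) (p : MvPolynomial (Fin m) ℝ) (s : Fin m →₀ ℕ) :
    coeff s (del g p) = if s g = 0 then coeff s p else 0 := by
  induction p using MvPolynomial.induction_on' with
  | monomial u a =>
    rw [del_monomial, coeff_monomial]
    rcases eq_or_ne u s with rfl | hus <;> split_ifs <;> simp_all
  | add p q hp hq =>
    rw [del, map_add, coeff_add, ← del, ← del, hp, hq, coeff_add]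
    split_ifs <;> simp

theorem mem_support_del {g : Fin m} {p : MvPolynomial (Fin m) ℝ} {s : Fin m →₀ ℕ} :
    s ∈ (del g p).support ↔ s ∈ p.support ∧ s g = 0 := by
  simp only [mem_support_iff, coeff_del]
  split_ifs with h <;> simp [h]

theorem degreeOf_del_le (i g : Fin m) (p : MvPolynomial (Fin m) ℝ) :
    degreeOf i (del g p) ≤ degreeOf i p :=
  degreeOf_le_iff.mpr fun _ hs => monomial_le_degreeOf i (mem_support_del.mp hs).1

theorem degreeOf_del_self (g : Fin m) (p : MvPolynomial (Fin m) ℝ) :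
    degreeOf g (del g p) = 0 :=
  Nat.le_zero.mp (degreeOf_le_iff.mpr fun _ hs => (mem_support_del.mp hs).2.le)

theorem del_of_degreeOf_eq_zero {g : Fin m} {p : MvPolynomial (Fin m) ℝ}
    (h : degreeOf g p = 0) : del g p = p := by
  ext s
  rw [coeff_del]
  split_ifs with hs
  · rfl
  · exact (notMem_support_iff.mp fun hp =>
      hs (Nat.le_zero.mp (h ▸ monomial_le_degreeOf g hp))).symm

theorem del_pderiv_comm {i j : Fin m} (h : i ≠ j) (p : MvPolynomial (Fin m) ℝ) :
    del i (pderiv j p) = pderiv j (del i p) := by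
  ext s
  simp [coeff_del, coeff_pderiv, Finsupp.single_eq_of_ne h]

theorem del_add (g : Fin m) (p q : MvPolynomial (Fin m) ℝ) : del g (p + q) = del g p + del g q :=
  map_add _ p q

theorem del_sub (g : Fin m) (p q : MvPolynomial (Fin m) ℝ) : del g (p - q) = del g p - del g q :=
  map_sub _ p q

theorem del_mul (g : Fin m) (p q : MvPolynomial (Fin m) ℝ) : del g (p * q) = del g p * del g q :=
  map_mul _ p q

theorem eq_del_add_X_mul_pderiv {g : Fin m} {p : MvPolynomial (Fin m) ℝ}
    (h : degreeOf g p ≤ 1) :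
    p = del g p + X g * pderiv g p := by
  classical
  ext s
  rw [coeff_add, coeff_del, coeff_X_mul', coeff_pderiv]
  by_cases hs : s g = 0
  · simp [hs]
  · have hle : Finsupp.single g 1 ≤ s :=
      Finsupp.single_le_iff.mpr (Nat.one_le_iff_ne_zero.mpr hs)
    have hsg : coeff s p ≠ 0 → s g = 1 := fun hp => le_antisymm
      ((monomial_le_degreeOf g (mem_support_iff.mpr hp)).trans h) (Nat.one_le_iff_ne_zero.mpr hs)
    rw [if_neg hs, if_pos (Finsupp.mem_support_iff.mpr hs), tsub_add_cancel_of_le hle,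
      Finsupp.tsub_apply, Finsupp.single_eq_same, zero_add]
    by_cases hp : coeff s p = 0
    · simp [hp]
    · simp [hsg hp]

end Deletion

section Rayleigh

variable {m : ℕ}

theorem degreeOf_ray_le (g e f : Fin m) (Z : MvPolynomial (Fin m) ℝ) :
    degreeOf g (Ray e f Z) ≤ 2 * degreeOf g Z := by
  have hZe := degreeOf_pderiv_le g e Z
  have hZf := degreeOf_pderiv_le g f Z
  have hZef := (degreeOf_pderiv_le g f (pderiv e Z)).trans hZe
  refine (degreeOf_sub_le g _ _).trans (max_le ?_ ?_)
  · exact (degreeOf_mul_le g _ _).trans (by omega)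
  · exact (degreeOf_mul_le g _ _).trans (by omega)

/-- The polarization of `Ray e f`: `Ray e f (P + Q) = Ray e f P + mixedRay e f P Q + Ray e f Q`. -/
noncomputable def mixedRay (e f : Fin m) (P Q : MvPolynomial (Fin m) ℝ) :
    MvPolynomial (Fin m) ℝ :=
  pderiv e P * pderiv f Q + pderiv e Q * pderiv f P
    - pderiv f (pderiv e P) * Q - pderiv f (pderiv e Q) * P

theorem ray_add_X_mul {e f g : Fin m} (heg : e ≠ g) (hfg : f ≠ g)
    (P Q : MvPolynomial (Fin m) ℝ) :
    Ray e f (P + X g * Q) = Ray e f Q * X g ^ 2 + mixedRay e f P Q * X g + Ray e f P := by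
  simp only [Ray, mixedRay, map_add, pderiv_mul, pderiv_X_of_ne heg.symm, pderiv_X_of_ne hfg.symm,
    zero_mul, zero_add]
  ring

theorem mixedRay_comm (e f : Fin m) (P Q : MvPolynomial (Fin m) ℝ) :
    mixedRay e f P Q = mixedRay f e P Q := by
  simp only [mixedRay, pderiv_comm e f]
  ring

theorem mixedRay_add_X_mul {e f : Fin m} (hef : e ≠ f) {a b c d : MvPolynomial (Fin m) ℝ}
    (ha : pderiv e a = 0) (hb : pderiv e b = 0) (hc : pderiv e c = 0) (hd : pderiv e d = 0) :
    mixedRay e f (a + X e * b) (c + X e * d)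
      = b * pderiv f c + d * pderiv f a - pderiv f b * c - pderiv f d * a := by
  simp only [mixedRay, map_add, pderiv_mul, pderiv_X_self, pderiv_X_of_ne hef, ha, hb, hc, hd,
    zero_mul, mul_zero, zero_add, add_zero, one_mul]
  ring

theorem del_mixedRay {e f : Fin m} (hef : e ≠ f) {P Q : MvPolynomial (Fin m) ℝ}
    (hP : degreeOf e P ≤ 1) (hQ : degreeOf e Q ≤ 1) :
    del e (mixedRay e f P Q) = mixedRay e f P Q := by
  have ha := degreeOf_del_self e P
  have hb := degreeOf_pderiv_self_eq_zero hP
  have hc := degreeOf_del_self e Q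
  have hd := degreeOf_pderiv_self_eq_zero hQ
  have hpderiv {p : MvPolynomial (Fin m) ℝ} (hp : degreeOf e p = 0) :
      degreeOf e (pderiv f p) = 0 :=
    Nat.le_zero.mp (hp ▸ degreeOf_pderiv_le e f p)
  rw [eq_del_add_X_mul_pderiv hP, eq_del_add_X_mul_pderiv hQ,
    mixedRay_add_X_mul hef (pderiv_eq_zero_of_degreeOf_eq_zero ha)
      (pderiv_eq_zero_of_degreeOf_eq_zero hb) (pderiv_eq_zero_of_degreeOf_eq_zero hc)
      (pderiv_eq_zero_of_degreeOf_eq_zero hd)]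
  simp only [del_sub, del_add, del_mul, del_of_degreeOf_eq_zero ha, del_of_degreeOf_eq_zero hb,
    del_of_degreeOf_eq_zero hc, del_of_degreeOf_eq_zero hd, del_of_degreeOf_eq_zero (hpderiv ha),
    del_of_degreeOf_eq_zero (hpderiv hb), del_of_degreeOf_eq_zero (hpderiv hc),
    del_of_degreeOf_eq_zero (hpderiv hd)]

theorem mixedRay_eq {e f : Fin m} (hef : e ≠ f) {P Q : MvPolynomial (Fin m) ℝ}
    (hPe : degreeOf e P ≤ 1) (hPf : degreeOf f P ≤ 1) (hQe : degreeOf e Q ≤ 1)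
    (hQf : degreeOf f Q ≤ 1) :
    mixedRay e f P Q = del f (pderiv e P) * del e (pderiv f Q)
      + del e (pderiv f P) * del f (pderiv e Q)
      - del e (del f Q) * pderiv e (pderiv f P)
      - pderiv e (pderiv f Q) * del e (del f P) := by
  have hdel_outer {i j : Fin m} {p : MvPolynomial (Fin m) ℝ} (hp : degreeOf i p ≤ 1) :
      del i (del j (pderiv i p)) = del j (pderiv i p) :=
    del_of_degreeOf_eq_zero
      (Nat.le_zero.mp ((degreeOf_del_le i j _).trans_eq (degreeOf_pderiv_self_eq_zero hp)))
  have hdel_inner {i j : Fin m} {p : MvPolynomial (Fin m) ℝ} (hp : degreeOf j p ≤ 1) :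
      del i (del j (pderiv j p)) = del i (pderiv j p) := by
    rw [del_of_degreeOf_eq_zero (degreeOf_pderiv_self_eq_zero hp)]
  have hdel_both {i j : Fin m} {p : MvPolynomial (Fin m) ℝ} (hi : degreeOf i p ≤ 1)
      (hj : degreeOf j p ≤ 1) :
      del i (del j (pderiv j (pderiv i p))) = pderiv i (pderiv j p) := by
    rw [hdel_inner ((degreeOf_pderiv_le j i p).trans hj), del_of_degreeOf_eq_zero
      (Nat.le_zero.mp ((degreeOf_pderiv_le i j _).trans_eq (degreeOf_pderiv_self_eq_zero hi))),
      pderiv_comm]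
  calc mixedRay e f P Q = del e (del f (mixedRay e f P Q)) := by
        rw [mixedRay_comm, del_mixedRay hef.symm hPf hQf, ← mixedRay_comm,
          del_mixedRay hef hPe hQe]
    _ = _ := by
        simp only [mixedRay, del_sub, del_add, del_mul, hdel_outer hPe, hdel_outer hQe,
          hdel_inner hPf, hdel_inner hQf, hdel_both hPe hPf, hdel_both hQe hQf]
        ring

end Rayleigh

theorem rayleigh_quadratic_middle_coefficient {m : ℕ} (Z : MvPolynomial (Fin m) ℝ)
    (hZ : Multiaffine Z) (e f g : Fin m)
    (hef : e ≠ f) (heg : e ≠ g) (hfg : f ≠ g) :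
    ∃ A C : MvPolynomial (Fin m) ℝ, A.degreeOf g = 0 ∧ C.degreeOf g = 0 ∧
      Ray e f Z = A * X g ^ 2 +
        (del f (del g (pderiv e Z)) * del e (pderiv f (pderiv g Z))
          + del e (del g (pderiv f Z)) * del f (pderiv e (pderiv g Z))
          - del e (del f (pderiv g Z)) * del g (pderiv e (pderiv f Z))
          - pderiv e (pderiv f (pderiv g Z)) * del e (del f (del g Z))) * X g + C := by
  have hA : degreeOf g (Ray e f (pderiv g Z)) = 0 := Nat.le_zero.mp
    ((degreeOf_ray_le g e f _).trans_eq (by rw [degreeOf_pderiv_self_eq_zero (hZ g)]))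
  have hC : degreeOf g (Ray e f (del g Z)) = 0 := Nat.le_zero.mp
    ((degreeOf_ray_le g e f _).trans_eq (by rw [degreeOf_del_self]))
  refine ⟨Ray e f (pderiv g Z), Ray e f (del g Z), hA, hC, ?_⟩
  have hP (i : Fin m) : degreeOf i (del g Z) ≤ 1 := (degreeOf_del_le i g Z).trans (hZ i)
  have hQ (i : Fin m) : degreeOf i (pderiv g Z) ≤ 1 := (degreeOf_pderiv_le i g Z).trans (hZ i)
  conv_lhs => rw [eq_del_add_X_mul_pderiv (hZ g)]
  rw [ray_add_X_mul heg hfg, mixedRay_eq hef (hP e) (hP f) (hQ e) (hQ f)]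
  simp only [del_pderiv_comm heg.symm, del_pderiv_comm hfg.symm]
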